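/- Let g_{1,k} = X_{[1,k-1]} Z_{[1,k]} Δ_{k+1,k} (k = 1,...,n-1). For integers 1 ≤ i < j ≤ n, the telescoping identity X_{[1,j-1]\{i}} Z_{[1,j-1]} Δ_{j,i} = Σ_{k=i}^{j-1} X_{[k+2,j]} Z_{[k+1,j-1]} g_{1,k} holds, and the initial term of the left side with respect to reverse lexicographic order (x_1 > ... > x_n > y_1 > ... > y_n > z_1 > ... > z_n) is X_{[1,j]\{i}} Y_{{i}} Z_{[1,j-1]}, which is ≥ the initial term of each summand. -/

import Mathlib

open MvPolynomial

/-- 1-based index `i ∈ [1,n]` as an element of `Fin n`. -/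
def fi (n : ℕ) (hn : 0 < n) (i : ℕ) : Fin n := ⟨(i - 1) % n, Nat.mod_lt _ hn⟩

noncomputable def xz (k : Type*) [Field k] (n : ℕ) (hn : 0 < n) (i : ℕ) :
    MvPolynomial (Fin 3 × Fin n) k := X (0, fi n hn i)

noncomputable def yz (k : Type*) [Field k] (n : ℕ) (hn : 0 < n) (i : ℕ) :
    MvPolynomial (Fin 3 × Fin n) k := X (1, fi n hn i)

noncomputable def zz (k : Type*) [Field k] (n : ℕ) (hn : 0 < n) (i : ℕ) :
    MvPolynomial (Fin 3 × Fin n) k := X (2, fi n hn i)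

noncomputable def Δz (k : Type*) [Field k] (n : ℕ) (hn : 0 < n) (a b : ℕ) :
    MvPolynomial (Fin 3 × Fin n) k :=
  xz k n hn a * yz k n hn b - xz k n hn b * yz k n hn a

/-- `g_{1,m} = X_{[1,m-1]} Z_{[1,m]} Δ_{m+1,m}`. -/
noncomputable def gOne (k : Type*) [Field k] (n : ℕ) (hn : 0 < n) (j : ℕ) :
    MvPolynomial (Fin 3 × Fin n) k :=
  (∏ t ∈ Finset.Icc 1 (j - 1), xz k n hn t) * (∏ t ∈ Finset.Icc 1 j, zz k n hn t) *
    Δz k n hn (j + 1) j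

/-- `v` is a more significant variable than `w`: the variables are ordered
`x_1 > … > x_n > y_1 > … > y_n > z_1 > … > z_n` (block 0 = x, 1 = y, 2 = z). -/
def vlt (n : ℕ) (v w : Fin 3 × Fin n) : Prop :=
  v.1 < w.1 ∨ (v.1 = w.1 ∧ v.2 < w.2)

/-- Total degree of an exponent vector. -/
def mdeg (n : ℕ) (a : (Fin 3 × Fin n) →₀ ℕ) : ℕ := a.sum fun _ e => e

/-- The (graded) reverse lexicographic order on exponent vectors: smaller degree,
or equal degree and larger exponent at the least significant variable where they
differ. -/
def rlt (n : ℕ) (a b : (Fin 3 × Fin n) →₀ ℕ) : Prop :=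
  mdeg n a < mdeg n b ∨
    (mdeg n a = mdeg n b ∧ ∃ v, b v < a v ∧ ∀ w, vlt n v w → a w = b w)

/-- `d` is the exponent of the initial term of `f` w.r.t. reverse lex order. -/
def IsInit {k : Type*} [Field k] (n : ℕ) (f : MvPolynomial (Fin 3 × Fin n) k)
    (d : (Fin 3 × Fin n) →₀ ℕ) : Prop :=
  d ∈ f.support ∧ ∀ e ∈ f.support, e ≠ d → rlt n e d

/-- Exponent vector of the squarefree monomial `X_A Y_B Z_C` (1-based index sets). -/
noncomputable def expOf (n : ℕ) (hn : 0 < n) (A B Cs : Finset ℕ) :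
    (Fin 3 × Fin n) →₀ ℕ :=
  (∑ t ∈ A, Finsupp.single ((0 : Fin 3), fi n hn t) 1) +
  (∑ t ∈ B, Finsupp.single ((1 : Fin 3), fi n hn t) 1) +
  (∑ t ∈ Cs, Finsupp.single ((2 : Fin 3), fi n hn t) 1)


/-! Write `T_m = X_{[1,j]∖{m}} y_m Z_{[1,j-1]}`. The left side is `T_i - T_j` and the `m`-th
summand is `T_m - T_{m+1}`, so the sum telescopes. For `p < q`, passing from `T_p` to `T_q`
trades `x_q y_p` for `x_p y_q`: the degree is unchanged and the last variable at which they
differ is `y_q`, which divides `T_q` only. Hence `T_q < T_p` in reverse lexicographic order, so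
`T_i` is the initial term of the left side and dominates both monomials of every summand. -/

section IntervalProducts

variable {M : Type*} [CommMonoid M] (f : ℕ → M)

lemma prod_Icc_split {a b c : ℕ} (hac : a ≤ c + 1) (hcb : c ≤ b) :
    ∏ t ∈ Finset.Icc a b, f t =
      (∏ t ∈ Finset.Icc a c, f t) * ∏ t ∈ Finset.Icc (c + 1) b, f t := by
  rw [← Finset.prod_union (Finset.disjoint_left.2 fun t ht ht' => by
    simp only [Finset.mem_Icc] at ht ht'; omega)]
  congr 1
  ext t
  simp only [Finset.mem_Icc, Finset.mem_union]
  omega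

lemma prod_Icc_erase {a b m : ℕ} (ham : a ≤ m) (hmb : m ≤ b) :
    ∏ t ∈ (Finset.Icc a b).erase m, f t =
      (∏ t ∈ Finset.Ico a m, f t) * ∏ t ∈ Finset.Icc (m + 1) b, f t := by
  rw [← Finset.prod_union (Finset.disjoint_left.2 fun t ht ht' => by
    simp only [Finset.mem_Icc, Finset.mem_Ico] at ht ht'; omega)]
  congr 1
  ext t
  simp only [Finset.mem_Icc, Finset.mem_Ico, Finset.mem_union, Finset.mem_erase]
  omega

end IntervalProducts

lemma sum_Icc_sub_succ {G : Type*} [AddCommGroup G] (f : ℕ → G) {a b : ℕ} (hab : a ≤ b) :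
    ∑ m ∈ Finset.Icc a b, (f m - f (m + 1)) = f a - f (b + 1) := by
  simpa only [neg_sub_neg] using Finset.sum_Icc_sub hab (fun m => -f m)

noncomputable def telescopeExp (n : ℕ) (hn : 0 < n) (j m : ℕ) : (Fin 3 × Fin n) →₀ ℕ :=
  expOf n hn ((Finset.Icc 1 j).erase m) {m} (Finset.Icc 1 (j - 1))

section Telescope

variable (k : Type*) [Field k] {n : ℕ} (hn : 0 < n)

lemma monomial_expOf (A B C : Finset ℕ) :
    monomial (expOf n hn A B C) (1 : k) =
      (∏ t ∈ A, xz k n hn t) * (∏ t ∈ B, yz k n hn t) * ∏ t ∈ C, zz k n hn t := by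
  simp only [expOf, xz, yz, zz, X, ← monomial_sum_one, monomial_mul, mul_one]

lemma prod_mul_gOne_eq_monomial_sub {j m : ℕ} (hm : 1 ≤ m) (hmj : m < j) :
    (∏ t ∈ Finset.Icc (m + 2) j, xz k n hn t) *
        (∏ t ∈ Finset.Icc (m + 1) (j - 1), zz k n hn t) * gOne k n hn m =
      monomial (telescopeExp n hn j m) 1 - monomial (telescopeExp n hn j (m + 1)) 1 := by
  obtain ⟨m, rfl⟩ : ∃ m', m = m' + 1 := ⟨m - 1, by omega⟩
  simp only [telescopeExp, monomial_expOf, gOne, Δz, Finset.prod_singleton, Nat.add_sub_cancel]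
  rw [prod_Icc_erase _ (by omega) (by omega), prod_Icc_erase _ (by omega) (by omega),
    prod_Icc_split (zz k n hn) (a := 1) (b := j - 1) (c := m + 1) (by omega) (by omega),
    prod_Icc_split (xz k n hn) (a := m + 1 + 1) (c := m + 1 + 1) (by omega) (by omega),
    Finset.Ico_add_one_right_eq_Icc, Finset.Ico_add_one_right_eq_Icc,
    Finset.prod_Icc_succ_top (a := 1) (b := m) (by omega) (xz k n hn), Finset.Icc_self,
    Finset.prod_singleton]
  ring

lemma prod_mul_Δz_eq_monomial_sub {i j : ℕ} (hi : 1 ≤ i) (hij : i < j) :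
    (∏ t ∈ (Finset.Icc 1 (j - 1)).erase i, xz k n hn t) *
        (∏ t ∈ Finset.Icc 1 (j - 1), zz k n hn t) * Δz k n hn j i =
      monomial (telescopeExp n hn j i) 1 - monomial (telescopeExp n hn j j) 1 := by
  obtain ⟨j, rfl⟩ : ∃ j', j = j' + 1 := ⟨j - 1, by omega⟩
  simp only [telescopeExp, monomial_expOf, Δz, Finset.prod_singleton, Nat.add_sub_cancel]
  rw [Finset.Icc_erase_right, Finset.Ico_add_one_right_eq_Icc,
    ← Finset.mul_prod_erase _ (xz k n hn) (Finset.mem_Icc.2 ⟨hi, by omega⟩),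
    ← Finset.insert_Icc_right_eq_Icc_add_one (by omega), Finset.erase_insert_of_ne (by omega),
    Finset.prod_insert (by simp)]
  ring

end Telescope

section ReverseLex

variable {n : ℕ}

lemma mdeg_eq_degree (a : (Fin 3 × Fin n) →₀ ℕ) : mdeg n a = a.degree := rfl

lemma rlt_irrefl (a : (Fin 3 × Fin n) →₀ ℕ) : ¬ rlt n a a := by
  rintro (h | ⟨-, _, h, -⟩) <;> exact lt_irrefl _ h

lemma rlt_add_single_swap (D : (Fin 3 × Fin n) →₀ ℕ) {p q : Fin n} (hpq : p < q) :
    rlt n (D + Finsupp.single (0, p) 1 + Finsupp.single (1, q) 1)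
      (D + Finsupp.single (0, q) 1 + Finsupp.single (1, p) 1) := by
  refine Or.inr ⟨by simp [mdeg_eq_degree], (1, q), by simp [hpq.ne'], ?_⟩
  rintro ⟨c, r⟩ hw
  simp only [vlt, Fin.lt_def, Fin.ext_iff] at hw
  simp only [Finsupp.add_apply, Finsupp.single_apply, Prod.ext_iff, Fin.ext_iff]
  -- `(c, r)` comes after `y_q`, so it is none of `x_p, x_q, y_p, y_q`
  split_ifs <;> simp_all <;> omega

lemma fi_lt_fi (hn : 0 < n) {p q : ℕ} (hp : 1 ≤ p) (hpq : p < q) (hqn : q ≤ n) :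
    fi n hn p < fi n hn q := by
  simp only [Fin.lt_def, fi, Nat.mod_eq_of_lt (show p - 1 < n by omega),
    Nat.mod_eq_of_lt (show q - 1 < n by omega)]
  omega

lemma expOf_singleton_eq (hn : 0 < n) {A : Finset ℕ} {q : ℕ} (hq : q ∈ A) (p : ℕ)
    (C : Finset ℕ) :
    expOf n hn A {p} C = expOf n hn (A.erase q) ∅ C +
      Finsupp.single (0, fi n hn q) 1 + Finsupp.single (1, fi n hn p) 1 := by
  simp only [expOf, ← Finset.add_sum_erase A _ hq, Finset.sum_singleton, Finset.sum_empty]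
  abel

lemma rlt_telescopeExp (hn : 0 < n) {j p q : ℕ} (hp : 1 ≤ p) (hpq : p < q) (hqj : q ≤ j)
    (hjn : j ≤ n) : rlt n (telescopeExp n hn j q) (telescopeExp n hn j p) := by
  have hpA : p ∈ (Finset.Icc 1 j).erase q := by
    simp only [Finset.mem_erase, Finset.mem_Icc]; omega
  have hqA : q ∈ (Finset.Icc 1 j).erase p := by
    simp only [Finset.mem_erase, Finset.mem_Icc]; omega
  rw [telescopeExp, telescopeExp, expOf_singleton_eq hn hpA, expOf_singleton_eq hn hqA,
    Finset.erase_right_comm]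
  exact rlt_add_single_swap _ (fi_lt_fi hn hp hpq (hqj.trans hjn))

lemma telescopeExp_eq_or_rlt (hn : 0 < n) {i j q : ℕ} (hi : 1 ≤ i) (hiq : i ≤ q) (hqj : q ≤ j)
    (hjn : j ≤ n) :
    telescopeExp n hn j q = telescopeExp n hn j i ∨
      rlt n (telescopeExp n hn j q) (telescopeExp n hn j i) :=
  hiq.eq_or_lt.imp (congrArg _ ·.symm) (rlt_telescopeExp hn hi · hqj hjn)

lemma eq_or_eq_of_mem_support_monomial_sub {σ R : Type*} [CommRing R] {a b e : σ →₀ ℕ}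
    (he : e ∈ (monomial a (1 : R) - monomial b 1).support) : e = a ∨ e = b := by
  classical
  have := MvPolynomial.support_sub _ _ _ he
  simp only [Finset.mem_union] at this
  exact this.imp (fun h => Finset.mem_singleton.1 (support_monomial_subset h))
    (fun h => Finset.mem_singleton.1 (support_monomial_subset h))

lemma isInit_monomial_sub_monomial {k : Type*} [Field k] {a b : (Fin 3 × Fin n) →₀ ℕ}
    (hba : rlt n b a) : IsInit n (monomial a (1 : k) - monomial b 1) a := by
  have hab : a ≠ b := by rintro rfl; exact rlt_irrefl a hba
  refine ⟨by simp [coeff_monomial, hab.symm], fun e he hea => ?_⟩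
  obtain rfl | rfl := eq_or_eq_of_mem_support_monomial_sub he
  · exact absurd rfl hea
  · exact hba

end ReverseLex

/-- For `1 ≤ i < j ≤ n`: the telescoping identity
`X_{[1,j-1]\{i}} Z_{[1,j-1]} Δ_{j,i} = Σ_{m=i}^{j-1} X_{[m+2,j]} Z_{[m+1,j-1]} g_{1,m}`
holds; the initial exponent of the left side in reverse lex order is that of
`X_{[1,j]\{i}} Y_{{i}} Z_{[1,j-1]}`; and it is `≥` the initial exponent of every
summand. -/
theorem stmt13 (k : Type*) [Field k] (n : ℕ)
    (i j : ℕ) (hi : 1 ≤ i) (hij : i < j) (hjn : j ≤ n) :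
    ((∏ t ∈ (Finset.Icc 1 (j - 1)).erase i, xz k n (by omega) t) *
        (∏ t ∈ Finset.Icc 1 (j - 1), zz k n (by omega) t) * Δz k n (by omega) j i =
      ∑ m ∈ Finset.Icc i (j - 1),
        (∏ t ∈ Finset.Icc (m + 2) j, xz k n (by omega) t) *
          (∏ t ∈ Finset.Icc (m + 1) (j - 1), zz k n (by omega) t) *
          gOne k n (by omega) m) ∧
    IsInit n
      ((∏ t ∈ (Finset.Icc 1 (j - 1)).erase i, xz k n (by omega) t) *
        (∏ t ∈ Finset.Icc 1 (j - 1), zz k n (by omega) t) * Δz k n (by omega) j i)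
      (expOf n (by omega) ((Finset.Icc 1 j).erase i) {i} (Finset.Icc 1 (j - 1))) ∧
    (∀ m ∈ Finset.Icc i (j - 1), ∀ e,
      IsInit n
        ((∏ t ∈ Finset.Icc (m + 2) j, xz k n (by omega) t) *
          (∏ t ∈ Finset.Icc (m + 1) (j - 1), zz k n (by omega) t) *
          gOne k n (by omega) m) e →
      (e = expOf n (by omega) ((Finset.Icc 1 j).erase i) {i} (Finset.Icc 1 (j - 1)) ∨
        rlt n e (expOf n (by omega) ((Finset.Icc 1 j).erase i) {i}
          (Finset.Icc 1 (j - 1))))) := by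
  have hn : 0 < n := by omega
  set T : ℕ → MvPolynomial (Fin 3 × Fin n) k := fun m => monomial (telescopeExp n hn j m) 1
  have hsummand : ∀ m ∈ Finset.Icc i (j - 1),
      (∏ t ∈ Finset.Icc (m + 2) j, xz k n hn t) *
        (∏ t ∈ Finset.Icc (m + 1) (j - 1), zz k n hn t) * gOne k n hn m = T m - T (m + 1) :=
    fun m hm => by
      obtain ⟨him, hmj⟩ := Finset.mem_Icc.1 hm
      exact prod_mul_gOne_eq_monomial_sub k hn (by omega) (by omega)
  have hlhs := prod_mul_Δz_eq_monomial_sub k hn hi hij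
  refine ⟨?_, ?_, fun m hm e he => ?_⟩
  · rw [hlhs, Finset.sum_congr rfl hsummand, sum_Icc_sub_succ T (by omega),
      Nat.sub_add_cancel (by omega)]
  · rw [hlhs]
    exact isInit_monomial_sub_monomial (rlt_telescopeExp hn hi hij le_rfl hjn)
  · rw [hsummand m hm] at he
    simp only [Finset.mem_Icc] at hm
    rcases eq_or_eq_of_mem_support_monomial_sub he.1 with rfl | rfl
    · exact telescopeExp_eq_or_rlt hn hi hm.1 (by omega) hjn
    · exact telescopeExp_eq_or_rlt hn hi (by omega) (by omega) hjn
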